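/- arXiv:2503.03121 — 4 statements merged into one kernel-verified Lean document; each statement's English description precedes it below -/
import Mathlib

section
/- A partition λ with Frobenius partition 𝔉(λ) = (a_1,...,a_s; b_1,...,b_s) is a t-core (no hook length divisible by t) if and only if: (1) a_i + b_j + 1 ≢ 0 (mod t) for all i,j; (2) whenever a_i ≥ t, the value a_i − t also appears among the a's; and (3) whenever b_j ≥ t, the value b_j − t also appears among the b's. -/
open Filter

/-- A partition represented as a weakly decreasing, eventually zero sequence of parts
(0-indexed: `f i` is the (i+1)-st part). -/
def IsPartition (f : ℕ → ℕ) : Prop :=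
  Antitone f ∧ ∀ᶠ i in atTop, f i = 0

/-- The size `|λ|` of a partition. -/
noncomputable def psize (f : ℕ → ℕ) : ℕ := ∑' i, f i

/-- The conjugate partition: `conj f j` is the number of parts of `f` exceeding `j`,
i.e. the (j+1)-st column length. -/
noncomputable def conj (f : ℕ → ℕ) : ℕ → ℕ := fun j => Nat.card {i : ℕ // j < f i}

/-- The Durfee square size: the number of indices `i` with `λ_{i+1} ≥ i+1`. -/
noncomputable def durfee (f : ℕ → ℕ) : ℕ := Nat.card {i : ℕ // i < f i}

/-- Top Frobenius entry `a_{i+1} = λ_{i+1} - (i+1)` (0-indexed). -/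
noncomputable def frobA (f : ℕ → ℕ) (i : ℕ) : ℕ := f i - (i + 1)

/-- Bottom Frobenius entry `b_{i+1} = λ'_{i+1} - (i+1)` (0-indexed). -/
noncomputable def frobB (f : ℕ → ℕ) (i : ℕ) : ℕ := conj f i - (i + 1)

/-- Hook length of the (0-indexed) box `(i,j)` (valid when `j < f i`):
`h = (λ_i - j) + (λ'_j - i) - 1` in 1-indexed terms, which equals
`(λ_i - i) + (λ'_j - j) + 1`. -/
noncomputable def hook (f : ℕ → ℕ) (i j : ℕ) : ℕ :=
  (f i - (j + 1)) + (conj f j - (i + 1)) + 1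

/-- A `t`-core partition: no hook length divisible by `t`. -/
def IsTCore (t : ℕ) (f : ℕ → ℕ) : Prop :=
  IsPartition f ∧ ∀ i j, j < f i → ¬ t ∣ hook f i j

/-!
Encode `λ` by its Maya diagram `M = {λ_i - i : i ≥ 1} ⊆ ℤ`. Its complement is
`{j - 1 - λ'_j : j ≥ 1}`, the boxes `(i, j)` of `λ` correspond to the pairs `y < x` with
`x = λ_i - i ∈ M` and `y = j - 1 - λ'_j ∉ M`, and the hook length of the box is `x - y`. Hence `λ`
is a `t`-core iff `M` is closed under `x ↦ x - t`. The nonnegative elements of `M` are the `a_i`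
and the negative integers outside `M` are the `-1 - b_j`, so splitting the closure condition
according to the signs of `x` and `x - t` gives conditions (1)–(3).
-/

open Set

theorem Nat.mem_iff_lt_card_of_isLowerSet {S : Set ℕ} (hS : IsLowerSet S) (hS' : S ≠ univ)
    (i : ℕ) : i ∈ S ↔ i < Nat.card S := by
  obtain h | ⟨a, rfl⟩ := hS.eq_univ_or_Iio
  · exact absurd h hS'
  · simp

section SubClosed

variable {M : Set ℤ} {t : ℤ}

theorem forall_sub_mem_iff_forall_not_dvd (ht : 0 < t) :
    (∀ x ∈ M, x - t ∈ M) ↔ ∀ x ∈ M, ∀ y ∉ M, y < x → ¬ t ∣ x - y := by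
  constructor
  · intro hM x hx y hy hyx ⟨m, hm⟩
    have hsub : ∀ k : ℕ, x - t * k ∈ M := by
      intro k
      induction k with
      | zero => simpa using hx
      | succ k ih => simpa [mul_add, sub_add_eq_sub_sub] using hM _ ih
    have hm0 : 0 ≤ m := by nlinarith
    lift m to ℕ using hm0
    exact hy (by simpa [← hm] using hsub m)
  · intro hM x hx
    by_contra hxt
    exact hM x hx (x - t) hxt (by omega) (by simp)

theorem forall_sub_mem_iff_split_at_zero (ht : 0 < t) :
    (∀ x ∈ M, x - t ∈ M) ↔
      (∀ x ∈ M, ∀ y ∉ M, 0 ≤ x → y < 0 → ¬ t ∣ x - y) ∧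
      (∀ x ∈ M, t ≤ x → x - t ∈ M) ∧
      (∀ y ∉ M, y + t < 0 → y + t ∉ M) := by
  constructor
  · intro hM
    refine ⟨fun x hx y hy hx0 hy0 => ?_, fun x hx _ => hM x hx, fun y hy _ hyt => ?_⟩
    · exact (forall_sub_mem_iff_forall_not_dvd ht).mp hM x hx y hy (by omega)
    · exact hy (by simpa using hM _ hyt)
  · rintro ⟨hdvd, hge, hneg⟩ x hx
    by_contra hxt
    rcases lt_or_ge x 0 with hx0 | hx0
    · exact hneg (x - t) hxt (by omega) (by simpa using hx)
    · rcases lt_or_ge x t with hxt' | htx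
      · exact hdvd x hx (x - t) hxt hx0 (by omega) (by simp)
      · exact hxt (hge x hx htx)

end SubClosed

-- Rows and columns are 0-indexed: `rowCoord f i = λ_{i+1} - (i+1)`, `colCoord f j = j - λ'_{j+1}`.
def rowCoord (f : ℕ → ℕ) (i : ℕ) : ℤ := f i - (i + 1)

noncomputable def colCoord (f : ℕ → ℕ) (j : ℕ) : ℤ := j - conj f j

def mayaDiagram (f : ℕ → ℕ) : Set ℤ := range (rowCoord f)

namespace IsPartition

variable {f : ℕ → ℕ} (hf : IsPartition f)
include hf

theorem lt_conj_iff (i j : ℕ) : i < conj f j ↔ j < f i := by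
  obtain ⟨n, hn⟩ := hf.2.exists
  refine (Nat.mem_iff_lt_card_of_isLowerSet (S := {i | j < f i}) ?_ ?_ i).symm
  · exact fun a b hba ha => lt_of_lt_of_le ha (hf.1 hba)
  · exact ne_univ_iff_exists_notMem _ |>.mpr ⟨n, by simp [hn]⟩

theorem lt_durfee_iff (i : ℕ) : i < durfee f ↔ i < f i := by
  obtain ⟨n, hn⟩ := hf.2.exists
  refine (Nat.mem_iff_lt_card_of_isLowerSet (S := {i | i < f i}) ?_ ?_ i).symm
  · exact fun a b hba ha => lt_of_le_of_lt hba (lt_of_lt_of_le ha (hf.1 hba))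
  · exact ne_univ_iff_exists_notMem _ |>.mpr ⟨n, by simp [hn]⟩

theorem colCoord_lt_rowCoord_iff (i j : ℕ) : colCoord f j < rowCoord f i ↔ j < f i := by
  have := hf.lt_conj_iff i j
  unfold colCoord rowCoord
  omega

theorem rowCoord_ne_colCoord (i j : ℕ) : rowCoord f i ≠ colCoord f j := by
  have := hf.lt_conj_iff i j
  unfold colCoord rowCoord
  omega

theorem exists_colCoord_eq {z : ℤ} (hz : z ∉ mayaDiagram f) : ∃ j, colCoord f j = z := by
  have hex : ∃ i, rowCoord f i ≤ z := by
    obtain ⟨n, hn⟩ := eventually_atTop.mp hf.2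
    refine ⟨n + (-z).toNat, ?_⟩
    have := hn (n + (-z).toNat) (by omega)
    unfold rowCoord
    omega
  -- `i₀` is the first row with coordinate `≤ z`; then `z` is the coordinate of column `z + i₀`.
  obtain ⟨i₀, hle, hmin⟩ : ∃ i₀, rowCoord f i₀ ≤ z ∧ ∀ i < i₀, z < rowCoord f i :=
    ⟨Nat.find hex, Nat.find_spec hex, fun i hi => not_le.mp (Nat.find_min hex hi)⟩
  have hlt : rowCoord f i₀ < z := hle.lt_of_ne fun h => hz ⟨i₀, h⟩
  unfold rowCoord at hlt
  have hconj : conj f (z + i₀).toNat = i₀ := by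
    refine eq_of_forall_lt_iff fun i => ?_
    rw [hf.lt_conj_iff]
    constructor
    · intro hi
      by_contra! hi₀
      have := hf.1 hi₀
      omega
    · intro hi
      have h₁ := hmin (i₀ - 1) (by omega)
      have h₂ := hf.1 (show i ≤ i₀ - 1 by omega)
      unfold rowCoord at h₁
      omega
  refine ⟨(z + i₀).toNat, ?_⟩
  unfold colCoord rowCoord at *
  omega

theorem compl_mayaDiagram : (mayaDiagram f)ᶜ = range (colCoord f) := by
  ext z
  refine ⟨fun hz => hf.exists_colCoord_eq hz, ?_⟩
  rintro ⟨j, rfl⟩ ⟨i, hi⟩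
  exact hf.rowCoord_ne_colCoord i j hi

theorem hook_eq {i j : ℕ} (h : j < f i) : (hook f i j : ℤ) = rowCoord f i - colCoord f j := by
  have := (hf.lt_conj_iff i j).mpr h
  unfold hook rowCoord colCoord
  omega

theorem isTCore_iff (t : ℕ) :
    IsTCore t f ↔ ∀ x ∈ mayaDiagram f, ∀ y ∉ mayaDiagram f, y < x → ¬ (t : ℤ) ∣ x - y := by
  simp only [IsTCore, hf, true_and, ← mem_compl_iff]
  rw [hf.compl_mayaDiagram]
  simp only [mayaDiagram, forall_mem_range]
  refine forall₂_congr fun i j => ?_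
  rw [hf.colCoord_lt_rowCoord_iff]
  exact imp_congr_right fun h => by rw [← hf.hook_eq h, Int.natCast_dvd_natCast]

theorem rowCoord_nonneg_iff (i : ℕ) : 0 ≤ rowCoord f i ↔ i < durfee f := by
  rw [hf.lt_durfee_iff, rowCoord]
  omega

theorem colCoord_neg_iff (j : ℕ) : colCoord f j < 0 ↔ j < durfee f := by
  rw [hf.lt_durfee_iff, ← hf.lt_conj_iff, colCoord]
  omega

theorem natCast_frobA {i : ℕ} (hi : i < durfee f) : (frobA f i : ℤ) = rowCoord f i := by
  rw [← hf.rowCoord_nonneg_iff, rowCoord] at hi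
  rw [frobA, rowCoord]
  omega

theorem natCast_frobB {j : ℕ} (hj : j < durfee f) : (frobB f j : ℤ) = -1 - colCoord f j := by
  rw [← hf.colCoord_neg_iff, colCoord] at hj
  rw [frobB, colCoord]
  omega

theorem exists_frobA_eq_iff (m : ℕ) :
    (∃ k, k < durfee f ∧ frobA f k = m) ↔ (m : ℤ) ∈ mayaDiagram f := by
  refine exists_congr fun k => ?_
  rw [← hf.rowCoord_nonneg_iff, frobA, rowCoord]
  omega

theorem exists_frobB_eq_iff (m : ℕ) :
    (∃ k, k < durfee f ∧ frobB f k = m) ↔ (-1 - m : ℤ) ∉ mayaDiagram f := by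
  rw [← mem_compl_iff, hf.compl_mayaDiagram]
  refine exists_congr fun k => ?_
  rw [← hf.colCoord_neg_iff, frobB, colCoord]
  omega

theorem forall_not_dvd_frob_iff (t : ℕ) :
    (∀ i j, i < durfee f → j < durfee f → ¬ t ∣ (frobA f i + frobB f j + 1)) ↔
      ∀ x ∈ mayaDiagram f, ∀ y ∉ mayaDiagram f, 0 ≤ x → y < 0 → ¬ (t : ℤ) ∣ x - y := by
  simp only [← mem_compl_iff]
  rw [hf.compl_mayaDiagram]
  simp only [mayaDiagram, forall_mem_range, hf.rowCoord_nonneg_iff, hf.colCoord_neg_iff]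
  refine forall₂_congr fun i j => imp_congr_right fun hi => imp_congr_right fun hj => ?_
  rw [← Int.natCast_dvd_natCast]
  push_cast
  rw [hf.natCast_frobA hi, hf.natCast_frobB hj]
  ring_nf

theorem forall_frobA_sub_iff (t : ℕ) :
    (∀ i, i < durfee f → t ≤ frobA f i → ∃ k, k < durfee f ∧ frobA f k = frobA f i - t) ↔
      ∀ x ∈ mayaDiagram f, (t : ℤ) ≤ x → x - t ∈ mayaDiagram f := by
  simp only [hf.exists_frobA_eq_iff]
  constructor
  · rintro h _ ⟨i, rfl⟩ hti
    have hi : i < durfee f := (hf.rowCoord_nonneg_iff i).mp (by omega)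
    have ha := hf.natCast_frobA hi
    have := h i hi (by omega)
    rwa [Nat.cast_sub (by omega), ha] at this
  · intro h i hi hti
    rw [Nat.cast_sub hti, hf.natCast_frobA hi]
    exact h _ ⟨i, rfl⟩ (by have := hf.natCast_frobA hi; omega)

theorem forall_frobB_sub_iff (t : ℕ) :
    (∀ j, j < durfee f → t ≤ frobB f j → ∃ k, k < durfee f ∧ frobB f k = frobB f j - t) ↔
      ∀ y ∉ mayaDiagram f, y + t < 0 → y + t ∉ mayaDiagram f := by
  simp only [hf.exists_frobB_eq_iff]
  constructor
  · intro h y hy hyt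
    obtain ⟨j, rfl⟩ := hf.exists_colCoord_eq hy
    have hj : j < durfee f := (hf.colCoord_neg_iff j).mp (by omega)
    have hb := hf.natCast_frobB hj
    have := h j hj (by omega)
    rw [Nat.cast_sub (by omega), hb] at this
    convert this using 2
    ring
  · intro h j hj htb
    have hcol : colCoord f j ∉ mayaDiagram f := fun ⟨i, hi⟩ => hf.rowCoord_ne_colCoord i j hi
    have hb := hf.natCast_frobB hj
    rw [Nat.cast_sub htb, hb]
    convert h _ hcol (by omega) using 2
    ring

end IsPartition

/-- A partition is a `t`-core iff (1) no `a_i + b_j + 1` is divisible by `t`,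
(2) whenever `a_i ≥ t`, the value `a_i - t` also occurs in the top row, and
(3) whenever `b_j ≥ t`, the value `b_j - t` also occurs in the bottom row. -/
theorem stmt3 (t : ℕ) (ht : 0 < t) (f : ℕ → ℕ) (hf : IsPartition f) :
    IsTCore t f ↔
      ((∀ i j, i < durfee f → j < durfee f → ¬ t ∣ (frobA f i + frobB f j + 1)) ∧
       (∀ i, i < durfee f → t ≤ frobA f i →
          ∃ k, k < durfee f ∧ frobA f k = frobA f i - t) ∧
       (∀ j, j < durfee f → t ≤ frobB f j →
          ∃ k, k < durfee f ∧ frobB f k = frobB f j - t)) := by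
  have ht' : (0 : ℤ) < t := by exact_mod_cast ht
  rw [hf.isTCore_iff, ← forall_sub_mem_iff_forall_not_dvd ht',
    forall_sub_mem_iff_split_at_zero ht', hf.forall_not_dvd_frob_iff, hf.forall_frobA_sub_iff,
    hf.forall_frobB_sub_iff]
end

section
/- Let t ≥ 1. If λ is a partition whose Frobenius partition satisfies a_i + b_j + 1 ≢ 0 (mod t) for all i,j but there exists an index i with a_i ≥ t such that a_i − t does not appear among the a's, then λ has a box of hook length exactly t (and hence λ is not a t-core). -/
open Filter

/-!
Write `a = a_i` and `c = a + 1 - t ≥ 1`. Since `λ_k - k` is strictly decreasing, there is a last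
row `k ≥ i` with `λ_k ≥ k + c` (0-indexed). If `λ_k = k + c` then `a_k = c - 1 = a - t`, which is
excluded. Otherwise the box `(i, k + c)` lies in `λ`, its column has length `k + 1` because
`λ_{k+1} ≤ k + c`, and its hook length is `(a - c + i + 1 - k) + (k - i) = t`.
-/

lemma conj_eq_succ_of_lt_of_le {f : ℕ → ℕ} (hf : Antitone f) {j k : ℕ} (hk : j < f k)
    (hk1 : f (k + 1) ≤ j) : conj f j = k + 1 := by
  have hset : {m : ℕ | j < f m} = Set.Iio (k + 1) := by
    ext m
    simp only [Set.mem_ofPred_eq, Set.mem_Iio]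
    constructor
    · intro hm
      by_contra! hkm
      have := hf hkm
      omega
    · intro hm
      have := hf (Nat.le_of_lt_succ hm)
      omega
  change Nat.card ({m : ℕ | j < f m} : Set ℕ) = k + 1
  simp [hset]

lemma lt_durfee_of_lt {f : ℕ → ℕ} (hf : IsPartition f) {k : ℕ} (hk : k < f k) :
    k < durfee f := by
  obtain ⟨N, hN⟩ := eventually_atTop.mp hf.2
  have hfin : {m : ℕ | m < f m}.Finite :=
    (Set.finite_Iio N).subset fun m hm => by
      by_contra! hmN
      simp_all [hN m (not_lt.mp hmN)]
  have hsub : Set.Iio (k + 1) ⊆ {m : ℕ | m < f m} := fun m hm => by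
    have hmk : m ≤ k := Nat.le_of_lt_succ hm
    have := hf.1 hmk
    simp only [Set.mem_ofPred_eq]
    omega
  have hcard : Nat.card (Set.Iio (k + 1)) ≤ durfee f := Nat.card_mono hfin hsub
  simpa using hcard

lemma exists_last_row_ge {f : ℕ → ℕ} (hf : IsPartition f) {i c : ℕ} (hi : i + c ≤ f i) :
    ∃ k, i ≤ k ∧ k + c ≤ f k ∧ f (k + 1) ≤ k + c := by
  have hex : ∃ n, f n < n + c := by
    obtain ⟨N, hN⟩ := eventually_atTop.mp hf.2
    exact ⟨N + 1, by rw [hN (N + 1) (Nat.le_succ N)]; omega⟩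
  have hin : i < Nat.find hex := (Nat.lt_find_iff hex i).2 fun m hm => by
    have := hf.1 hm
    omega
  obtain ⟨k, hk⟩ := Nat.exists_eq_add_of_lt hin
  have hmin := Nat.find_min hex (show i + k < Nat.find hex by omega)
  have hspec := Nat.find_spec hex
  rw [hk] at hspec
  exact ⟨i + k, by omega, by omega, by omega⟩

theorem exists_hook_eq_of_frobA_sub_ne {f : ℕ → ℕ} (hf : IsPartition f) {t i : ℕ} (ht : 1 ≤ t)
    (hti : t ≤ frobA f i) (hmiss : ∀ k, k < durfee f → frobA f k ≠ frobA f i - t) :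
    ∃ j, j < f i ∧ hook f i j = t := by
  have hfi : f i = i + 1 + frobA f i := by unfold frobA at hti ⊢; omega
  obtain ⟨k, hik, hk, hk1⟩ := exists_last_row_ge hf (i := i) (c := frobA f i + 1 - t) (by omega)
  have hfk : f k ≠ k + (frobA f i + 1 - t) := fun heq =>
    hmiss k (lt_durfee_of_lt hf (by omega)) (by unfold frobA; omega)
  have hfki := hf.1 hik
  refine ⟨k + (frobA f i + 1 - t), by omega, ?_⟩
  rw [hook, conj_eq_succ_of_lt_of_le hf.1 (by omega) hk1]
  omega

theorem stmt5_general (t : ℕ) (ht : 1 ≤ t) (f : ℕ → ℕ) (hf : IsPartition f)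
    (hmiss : ∃ i, i < durfee f ∧ t ≤ frobA f i ∧
      ∀ k, k < durfee f → frobA f k ≠ frobA f i - t) :
    (∃ i j, j < f i ∧ hook f i j = t) ∧ ¬ IsTCore t f := by
  obtain ⟨i, -, hti, hne⟩ := hmiss
  obtain ⟨j, hj, hhook⟩ := exists_hook_eq_of_frobA_sub_ne hf ht hti hne
  exact ⟨⟨i, j, hj, hhook⟩, fun hcore => hcore.2 i j hj (hhook ▸ dvd_refl t)⟩

/-- If no `a_i + b_j + 1` is divisible by `t` but some `a_i ≥ t` has `a_i - t`
missing from the top row, then `λ` has a box of hook length exactly `t`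
(hence `λ` is not a `t`-core). -/
theorem stmt5 (t : ℕ) (ht : 1 ≤ t) (f : ℕ → ℕ) (hf : IsPartition f)
    (hmod : ∀ i j, i < durfee f → j < durfee f → ¬ t ∣ (frobA f i + frobB f j + 1))
    (hmiss : ∃ i, i < durfee f ∧ t ≤ frobA f i ∧
      ∀ k, k < durfee f → frobA f k ≠ frobA f i - t) :
    (∃ i j, j < f i ∧ hook f i j = t) ∧ ¬ IsTCore t f :=
  stmt5_general t ht f hf hmiss
end

section
/- The number of t-core partitions of n equals the number of integer vectors (m_1,...,m_t) ∈ ℤ^t with m_1 + ... + m_t = 0 and t·Σ_{j=1}^t m_j(m_j − 1)/2 + Σ_{j=1}^t j·m_j = n. -/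
/-!
Encode a partition `λ` by its beads `λ_i - i - 1` (`i ≥ 0`): a set of integers that is bounded
above, contains every sufficiently negative integer, and whose complement is the set of gaps
`j - λ'_j`. The hook of the box `(i, j)` is bead `i` minus gap `j`, so `λ` is a `t`-core exactly
when its bead set is stable under `z ↦ z - t`. Sorting the integers onto the `t` runners
`{k t + r}` (James's abacus), a stable set is `{k t + r | k < c_r}` for a unique vector `c`.
Such a set is the bead set of a partition iff it has as many beads at or above `-K` as the empty
partition, i.e. iff `Σ c_r = 0`; adding up the beads of that window gives
`2|λ| = t Σ c_r (c_r - 1) + 2 Σ (r + 1) c_r`.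
-/

open Filter

open Finset

lemma mem_iff_lt_ncard_of_isLowerSet {S : Set ℕ} (hS : IsLowerSet S) (hfin : S.Finite) {i : ℕ} :
    i ∈ S ↔ i < S.ncard := by
  rcases hS.eq_univ_or_Iio with rfl | ⟨a, rfl⟩
  · exact absurd hfin Set.infinite_univ
  · simp

lemma antitone_add_of_strictAnti {x : ℕ → ℤ} (hx : StrictAnti x) : Antitone fun i => x i + i :=
  antitone_nat_of_succ_le fun i => by have := hx i.lt_add_one; push_cast; omega

lemma isLowerSet_of_sub_one_mem {S : Set ℤ} (hS : ∀ k ∈ S, k - 1 ∈ S) : IsLowerSet S := by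
  intro b a hab hb
  induction a, hab using Int.leInductionDown with
  | base => exact hb
  | pred a _ ha => exact hS a ha

lemma exists_strictAnti_range_eq {X : Set ℤ} (hbdd : BddAbove X) (hinf : X.Infinite) :
    ∃ x : ℕ → ℤ, StrictAnti x ∧ Set.range x = X := by
  obtain ⟨B, hB⟩ := hbdd
  set p : ℕ → Prop := fun n => B - n ∈ X
  have hX : X = (fun n : ℕ => B - n) '' Set.ofPred p := by
    ext z
    refine ⟨fun hz => ⟨(B - z).toNat, ?_, ?_⟩, ?_⟩
    · have := hB hz
      simp only [p, Set.mem_ofPred_eq]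
      rwa [Int.toNat_of_nonneg (by omega), sub_sub_cancel]
    · have := hB hz
      simp only
      omega
    · rintro ⟨n, hn, rfl⟩
      exact hn
  have hp : (Set.ofPred p).Infinite := fun hfin => hinf (hX ▸ hfin.image _)
  refine ⟨fun i => B - Nat.nth p i, fun i j hij => ?_, ?_⟩
  · have := Nat.nth_strictMono hp hij; simp only; omega
  · rw [hX, ← Nat.range_nth_of_infinite hp, ← Set.range_comp]; rfl

lemma StrictAnti.le_apply_iff_lt_card {x : ℕ → ℤ} (hx : StrictAnti x) {a : ℤ} {s : Finset ℤ}
    (hs : ∀ z, z ∈ s ↔ z ∈ Set.range x ∧ a ≤ z) {i : ℕ} : a ≤ x i ↔ i < s.card := by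
  set S := {i | a ≤ x i}
  have himage : x '' S = ↑s := by
    ext z
    simp only [Set.mem_image, S, Set.mem_ofPred_eq, mem_coe, hs, Set.mem_range]
    constructor
    · rintro ⟨i, hi, rfl⟩; exact ⟨⟨i, rfl⟩, hi⟩
    · rintro ⟨⟨i, rfl⟩, hi⟩; exact ⟨i, hi, rfl⟩
  have hfin : S.Finite := Set.Finite.of_finite_image (himage ▸ s.finite_toSet) hx.injective.injOn
  have hcard : S.ncard = s.card := by
    rw [← Set.ncard_image_of_injective S hx.injective, himage, Set.ncard_coe_finset]
  rw [← hcard]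
  exact mem_iff_lt_ncard_of_isLowerSet (fun a b hba ha => ha.trans (hx.antitone hba)) hfin

lemma StrictAnti.eq_neg_sub_one_of_le {x : ℕ → ℤ} (hx : StrictAnti x) {K : ℕ}
    (hcount : ∀ i, -(K : ℤ) ≤ x i ↔ i < K) (hlow : ∀ z < -(K : ℤ), z ∈ Set.range x) {j : ℕ}
    (hj : K ≤ j) : x j = -j - 1 := by
  have hbelow (l : ℕ) (hl : x l < -K) : K ≤ l ∧ x l + l ≤ -1 := by
    have hlK : K ≤ l := not_lt.mp fun h => by have := (hcount l).mpr h; omega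
    have hK : x K + K ≤ -1 := by have := (hcount K).not.mpr (lt_irrefl K); omega
    exact ⟨hlK, (antitone_add_of_strictAnti hx hlK).trans hK⟩
  induction j, hj using Nat.le_induction with
  | base =>
    obtain ⟨l, hl⟩ := hlow (-K - 1) (by omega)
    obtain ⟨hlK, hl'⟩ := hbelow l (by omega)
    obtain rfl : l = K := by omega
    exact hl
  | succ j hj ih =>
    obtain ⟨l, hl⟩ := hlow (-(j + 1 : ℕ) - 1) (by omega)
    have hjl : j < l := hx.lt_iff_gt.mp (by rw [hl, ih]; omega)
    obtain ⟨-, hl'⟩ := hbelow l (by omega)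
    obtain rfl : l = j + 1 := by omega
    exact hl

lemma sub_mul_mem_of_forall_sub_mem {X : Set ℤ} {t : ℤ} (hX : ∀ z ∈ X, z - t ∈ X) {z : ℤ}
    (hz : z ∈ X) (d : ℕ) : z - t * d ∈ X := by
  induction d with
  | zero => simpa using hz
  | succ d ih => convert hX _ ih using 1; push_cast; ring

lemma two_mul_sum_range_add_one (K : ℕ) : 2 * ∑ i ∈ range K, ((i : ℤ) + 1) = K * (K + 1) := by
  induction K with
  | zero => simp
  | succ K ih => rw [sum_range_succ]; push_cast; linear_combination ih

lemma two_mul_sum_fin_val (t : ℕ) : 2 * ∑ r : Fin t, ((r : ℕ) : ℤ) = t * (t - 1) := by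
  have h := two_mul_sum_range_add_one t
  rw [sum_add_distrib, sum_const, card_range, nsmul_one] at h
  rw [Fin.sum_univ_eq_sum_range (fun i => (i : ℤ))]
  linear_combination h

lemma two_mul_sum_Ico_mul_add (t r a : ℤ) {b : ℤ} (hab : a ≤ b) :
    2 * ∑ k ∈ Ico a b, (k * t + r) = (b - a) * ((a + b - 1) * t + 2 * r) := by
  induction b, hab using Int.leInduction with
  | base => simp
  | succ b hab ih =>
    rw [Finset.Ico_add_one_right_eq_Icc, sum_Icc_eq_sum_Ico_add _ hab]
    linear_combination ih

def bead (f : ℕ → ℕ) (i : ℕ) : ℤ := (f i : ℤ) - i - 1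

noncomputable def gap (f : ℕ → ℕ) (j : ℕ) : ℤ := (j : ℤ) - conj f j

def beads (f : ℕ → ℕ) : Set ℤ := Set.range (bead f)

section Partition

variable {f : ℕ → ℕ}

lemma IsPartition.exists_eq_zero (hf : IsPartition f) : ∃ K, ∀ i, K ≤ i → f i = 0 :=
  eventually_atTop.mp hf.2

lemma strictAnti_bead (hf : Antitone f) : StrictAnti (bead f) :=
  strictAnti_nat_of_succ_lt fun i => by
    have := hf (Nat.le_add_right i 1)
    simp only [bead]
    push_cast
    omega

lemma bddAbove_beads (hf : Antitone f) : BddAbove (beads f) :=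
  ⟨bead f 0, by rintro _ ⟨i, rfl⟩; exact (strictAnti_bead hf).antitone i.zero_le⟩

lemma IsPartition.lt_conj_iff_s8 (hf : IsPartition f) {i j : ℕ} : i < conj f j ↔ j < f i := by
  obtain ⟨K, hK⟩ := hf.exists_eq_zero
  have hlow : IsLowerSet {i | j < f i} := fun a b hba ha => lt_of_lt_of_le ha (hf.1 hba)
  have hfin : {i | j < f i}.Finite :=
    (Set.finite_Iio K).subset fun i hi =>
      Set.mem_Iio.mpr <| not_le.mp fun h => by simp [hK i h] at hi
  change i < Nat.card ({i | j < f i} : Set ℕ) ↔ _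
  rw [Nat.card_coe_set_eq]
  exact (mem_iff_lt_ncard_of_isLowerSet hlow hfin).symm

lemma IsPartition.gap_lt_bead_iff (hf : IsPartition f) {i j : ℕ} :
    gap f j < bead f i ↔ j < f i := by
  have := hf.lt_conj_iff_s8 (i := i) (j := j)
  simp only [gap, bead]
  omega

lemma IsPartition.bead_ne_gap (hf : IsPartition f) (i j : ℕ) : bead f i ≠ gap f j := by
  have := hf.lt_conj_iff_s8 (i := i) (j := j)
  simp only [gap, bead]
  omega

lemma IsPartition.hook_eq_s8 (hf : IsPartition f) {i j : ℕ} (hij : j < f i) :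
    (hook f i j : ℤ) = bead f i - gap f j := by
  have := hf.lt_conj_iff_s8.mpr hij
  simp only [hook, bead, gap]
  omega

/-- If exactly `i₀` beads lie above the non-bead `z`, then `z` is the gap number `z + i₀`. -/
lemma IsPartition.exists_gap_eq (hf : IsPartition f) {z : ℤ} (hz : z ∉ beads f) :
    ∃ j, gap f j = z := by
  have hx := strictAnti_bead hf.1
  set S := {i | z < bead f i}
  have hlow : IsLowerSet S := fun a b hba ha => lt_of_lt_of_le ha (hx.antitone hba)
  have hfin : S.Finite := (Set.finite_Iio (bead f 0 - z).toNat).subset fun i hi => by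
    have := antitone_add_of_strictAnti hx i.zero_le
    simp only [S, Set.mem_ofPred_eq, Nat.cast_zero, add_zero] at hi this
    simp only [Set.mem_Iio]
    omega
  have hS (i : ℕ) : z < bead f i ↔ i < S.ncard := mem_iff_lt_ncard_of_isLowerSet hlow hfin
  set i₀ := S.ncard
  have hi₀ : bead f i₀ < z :=
    lt_of_le_of_ne (not_lt.mp ((hS i₀).not.mpr (lt_irrefl _))) fun h => hz ⟨i₀, h⟩
  have hz₀ : 0 ≤ z + i₀ := by simp only [bead] at hi₀; omega
  have hrow (i : ℕ) : (z + i₀).toNat < f i ↔ i < i₀ := by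
    constructor
    · intro h
      by_contra! hi
      have := hf.1 hi
      simp only [bead] at hi₀
      omega
    · intro hi
      have h₁ := (hS (i₀ - 1)).mpr (by omega)
      have h₂ := hf.1 (show i ≤ i₀ - 1 by omega)
      simp only [bead] at h₁
      have : ((i₀ - 1 : ℕ) : ℤ) = i₀ - 1 := by omega
      omega
  have hconj : conj f (z + i₀).toNat = i₀ :=
    eq_of_forall_lt_iff fun i => hf.lt_conj_iff_s8.trans (hrow i)
  exact ⟨(z + i₀).toNat, by simp only [gap, hconj]; omega⟩

lemma IsPartition.isTCore_iff_s8 (hf : IsPartition f) {t : ℕ} :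
    IsTCore t f ↔ ∀ z ∈ beads f, z - t ∈ beads f := by
  constructor
  · rintro ⟨-, hcore⟩ _ ⟨i, rfl⟩
    by_contra hgap
    obtain ⟨j, hj⟩ := hf.exists_gap_eq hgap
    have hbox := hf.gap_lt_bead_iff.mp
      (lt_of_le_of_ne (by omega) (hf.bead_ne_gap i j).symm)
    have hhook := hf.hook_eq_s8 hbox
    exact hcore i j hbox ⟨1, by omega⟩
  · refine fun hX => ⟨hf, fun i j hbox ⟨d, hd⟩ => ?_⟩
    obtain ⟨k, hk⟩ := sub_mul_mem_of_forall_sub_mem hX ⟨i, rfl⟩ d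
    have hhook := hf.hook_eq_s8 hbox
    rw [hd] at hhook
    push_cast at hhook
    exact hf.bead_ne_gap k j (by omega)

lemma mem_beads_of_lt {K : ℕ} (hK : ∀ i, K ≤ i → f i = 0) {z : ℤ} (hz : z < -K) :
    z ∈ beads f := by
  have hzK : K ≤ (-z - 1).toNat := by omega
  exact ⟨(-z - 1).toNat, by simp only [bead, hK _ hzK]; omega⟩

lemma mem_image_bead_range_iff {K : ℕ} (hK : ∀ i, K ≤ i → f i = 0) {z : ℤ} :
    z ∈ (range K).image (bead f) ↔ z ∈ beads f ∧ -(K : ℤ) ≤ z := by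
  simp only [mem_image, mem_range, beads, Set.mem_range]
  constructor
  · rintro ⟨i, hi, rfl⟩
    exact ⟨⟨i, rfl⟩, by simp only [bead]; omega⟩
  · rintro ⟨⟨i, rfl⟩, hz⟩
    refine ⟨i, not_le.mp fun hi => ?_, rfl⟩
    simp only [bead, hK i hi] at hz
    omega

lemma two_mul_sum_bead {K : ℕ} (hK : ∀ i, K ≤ i → f i = 0) :
    2 * ∑ i ∈ range K, bead f i = 2 * psize f - K * (K + 1) := by
  have hsize : psize f = ∑ i ∈ range K, f i :=
    tsum_eq_sum fun i hi => hK i (not_lt.mp (mt mem_range.mpr hi))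
  simp only [bead, sub_sub, sum_sub_distrib, hsize]
  push_cast
  linear_combination -two_mul_sum_range_add_one K

lemma eq_of_beads_eq {g : ℕ → ℕ} (hf : Antitone f) (hg : Antitone g) (h : beads f = beads g) :
    f = g := by
  have hbead : bead f = bead g :=
    Set.range_injOn_strictMono (γ := ℤᵒᵈ) (strictAnti_bead hf) (strictAnti_bead hg) h
  funext i
  have := congrFun hbead i
  simp only [bead] at this
  omega

lemma exists_isPartition_bead_eq {x : ℕ → ℤ} (hx : StrictAnti x) {K : ℕ}
    (htail : ∀ j, K ≤ j → x j = -j - 1) : ∃ f, IsPartition f ∧ bead f = x := by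
  have hadd := antitone_add_of_strictAnti hx
  have hnonneg (i : ℕ) : 0 ≤ x i + i + 1 := by
    have h₁ : x (max i K) + (max i K : ℕ) ≤ x i + i := hadd (le_max_left i K)
    have h₂ := htail _ (le_max_right i K)
    omega
  refine ⟨fun i => (x i + i + 1).toNat, ⟨fun a b hab => ?_, ?_⟩, ?_⟩
  · have h : x b + b ≤ x a + a := hadd hab
    dsimp only
    omega
  · exact eventually_atTop.mpr ⟨K, fun i hi => by have := htail i hi; dsimp only; omega⟩
  · funext i
    have := hnonneg i
    simp only [bead]
    omega

lemma exists_isPartition_beads_eq {X : Set ℤ} {K : ℕ} {s : Finset ℤ}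
    (hs : ∀ z, z ∈ s ↔ z ∈ X ∧ -(K : ℤ) ≤ z) (hcard : s.card = K)
    (hlow : ∀ z < -(K : ℤ), z ∈ X) : ∃ f, IsPartition f ∧ beads f = X := by
  have hsub : X ⊆ ↑s ∪ Set.Iio (-(K : ℤ)) := fun z hz => by
    by_cases h : -(K : ℤ) ≤ z
    · exact Or.inl ((hs z).mpr ⟨hz, h⟩)
    · exact Or.inr (not_le.mp h)
  have hbdd : BddAbove X := (s.bddAbove.union bddAbove_Iio).mono hsub
  obtain ⟨x, hx, rfl⟩ := exists_strictAnti_range_eq hbdd ((Set.Iio_infinite _).mono hlow)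
  have hcount (i : ℕ) : -(K : ℤ) ≤ x i ↔ i < K := hcard ▸ hx.le_apply_iff_lt_card hs
  obtain ⟨f, hf, hfx⟩ := exists_isPartition_bead_eq hx fun j => hx.eq_neg_sub_one_of_le hcount hlow
  exact ⟨f, hf, by rw [beads, hfx]⟩

end Partition

/-- One more than the largest `k` with `k * t + r ∈ X` (an `sSup` junk value unless that set of
`k` is nonempty and bounded above). -/
noncomputable def runners (t : ℕ) (X : Set ℤ) (r : Fin t) : ℤ := sSup {k : ℤ | k * t + r ∈ X} + 1

section Abacus

variable {t : ℕ} [NeZero t]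

/-- Runner `r` is the residue class of `r` modulo `t`, with `k * t + r` at level `k`; this set
fills runner `r` exactly at the levels below `c r`. -/
def runnerSet (c : Fin t → ℤ) : Set ℤ :=
  {z | (Int.divModEquiv t z).1 < c (Int.divModEquiv t z).2}

lemma mul_add_mem_runnerSet_iff {c : Fin t → ℤ} {k : ℤ} {r : Fin t} :
    k * t + r ∈ runnerSet c ↔ k < c r := by
  have := (Int.divModEquiv t).apply_symm_apply (k, r)
  rw [Int.divModEquiv_symm_apply] at this
  simp only [runnerSet, Set.mem_ofPred_eq, this]

lemma exists_eq_mul_add (z : ℤ) : ∃ (k : ℤ) (r : Fin t), z = k * t + r := by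
  obtain ⟨⟨k, r⟩, rfl⟩ := (Int.divModEquiv t).symm.surjective z
  exact ⟨k, r, rfl⟩

lemma runnerSet_injective : Function.Injective (runnerSet (t := t)) := fun c c' h =>
  funext fun r => eq_of_forall_lt_iff fun k => by
    rw [← mul_add_mem_runnerSet_iff, h, mul_add_mem_runnerSet_iff]

lemma sub_mem_runnerSet {c : Fin t → ℤ} {z : ℤ} (hz : z ∈ runnerSet c) : z - t ∈ runnerSet c := by
  obtain ⟨k, r, rfl⟩ := exists_eq_mul_add (t := t) z
  rw [show k * t + r - t = (k - 1) * t + r by ring, mul_add_mem_runnerSet_iff]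
  rw [mul_add_mem_runnerSet_iff] at hz
  omega

lemma eq_runnerSet_runners {X : Set ℤ} (hbdd : BddAbove X) {a : ℤ} (hlow : ∀ z < a, z ∈ X)
    (hX : ∀ z ∈ X, z - t ∈ X) : X = runnerSet (runners t X) := by
  have ht : (1 : ℤ) ≤ t := by exact_mod_cast NeZero.one_le
  have key (r : Fin t) (k : ℤ) : k * t + r ∈ X ↔ k < runners t X r := by
    have hr : (r : ℤ) < t := by exact_mod_cast r.isLt
    set S := {k : ℤ | k * t + r ∈ X}
    have hS : IsLowerSet S := isLowerSet_of_sub_one_mem fun k hk => by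
      have := hX _ hk
      rwa [show k * t + r - t = (k - 1) * t + r by ring] at this
    have hne : S.Nonempty := ⟨-|a| - 1, hlow _ <| by
      nlinarith [neg_abs_le a, mul_nonneg (abs_nonneg a) (sub_nonneg.mpr ht)]⟩
    obtain ⟨B, hB⟩ := hbdd
    have hbddS : BddAbove S := ⟨max B 0, fun k hk => by
      have := hB hk
      rcases le_or_gt k 0 with h | h
      · exact h.trans (le_max_right _ _)
      · exact le_max_of_le_left (by nlinarith)⟩
    rw [runners, Int.lt_add_one_iff]
    exact ⟨fun hk => le_csSup hbddS hk, fun hk => hS hk (Int.csSup_mem hne hbddS)⟩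
  ext z
  obtain ⟨k, r, rfl⟩ := exists_eq_mul_add (t := t) z
  rw [key, mul_add_mem_runnerSet_iff]

variable (t) in
def abacusEquiv : (Σ _ : Fin t, ℤ) ≃ ℤ :=
  (Equiv.sigmaEquivProd (Fin t) ℤ).trans ((Equiv.prodComm _ _).trans (Int.divModEquiv t).symm)

lemma abacusEquiv_apply (r : Fin t) (k : ℤ) : abacusEquiv t ⟨r, k⟩ = k * t + r := rfl

noncomputable def runnerWindow (a : ℤ) (c : Fin t → ℤ) : Finset ℤ :=
  (univ.sigma fun r => Ico a (c r)).map (abacusEquiv t).toEmbedding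

lemma mem_runnerWindow {a : ℤ} {c : Fin t → ℤ} {z : ℤ} :
    z ∈ runnerWindow a c ↔ z ∈ runnerSet c ∧ a * t ≤ z := by
  obtain ⟨⟨r, k⟩, rfl⟩ := (abacusEquiv t).surjective z
  have hr : (r : ℤ) < t := by exact_mod_cast r.isLt
  have hr₀ : (0 : ℤ) ≤ r := by positivity
  have ht : (0 : ℤ) < t := by exact_mod_cast NeZero.pos t
  rw [runnerWindow, mem_map_equiv, Equiv.symm_apply_apply]
  simp only [mem_sigma, mem_univ, true_and, mem_Ico, abacusEquiv_apply, mul_add_mem_runnerSet_iff]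
  refine ⟨fun ⟨h₁, h₂⟩ => ⟨h₂, by nlinarith⟩, fun ⟨h₁, h₂⟩ => ⟨?_, h₁⟩⟩
  by_contra! h
  nlinarith

lemma card_runnerWindow {a : ℤ} {c : Fin t → ℤ} (h : ∀ r, a ≤ c r) :
    ((runnerWindow a c).card : ℤ) = ∑ r, c r - t * a := by
  rw [runnerWindow, card_map, card_sigma, Nat.cast_sum]
  simp only [Int.card_Ico, Int.toNat_of_nonneg (sub_nonneg.mpr (h _)), sum_sub_distrib, sum_const,
    card_univ, Fintype.card_fin, nsmul_eq_mul]

lemma two_mul_sum_runnerWindow {a : ℤ} {c : Fin t → ℤ} (h : ∀ r, a ≤ c r) :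
    2 * ∑ z ∈ runnerWindow a c, z = ∑ r, (c r - a) * ((a + c r - 1) * t + 2 * r) := by
  rw [runnerWindow, sum_map, sum_sigma, mul_sum]
  refine sum_congr rfl fun r _ => ?_
  simp only [Equiv.coe_toEmbedding, abacusEquiv_apply]
  exact two_mul_sum_Ico_mul_add _ _ _ (h r)

end Abacus

section SizeFormula

variable {t : ℕ} [NeZero t] {f : ℕ → ℕ} {c : Fin t → ℤ}

/-- Cutting at the multiple `-t K₀` of `t` makes the `t K₀` largest beads a union of runner
segments `[-K₀, c r)`. -/
lemma IsPartition.exists_image_bead_range_eq_runnerWindow (hf : IsPartition f)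
    (hc : beads f = runnerSet c) :
    ∃ K₀ : ℕ, (∀ r, -(K₀ : ℤ) ≤ c r) ∧ (∀ i, t * K₀ ≤ i → f i = 0) ∧
      (range (t * K₀)).image (bead f) = runnerWindow (-K₀) c := by
  obtain ⟨K, hK⟩ := hf.exists_eq_zero
  have ht : 1 ≤ t := NeZero.one_le
  have hKt : K ≤ t * (K + 1) := by nlinarith
  refine ⟨K + 1, fun r => ?_, fun i hi => hK i (by omega), ?_⟩
  · have hr : (r : ℤ) < t := by exact_mod_cast r.isLt
    have hmem := mem_beads_of_lt hK (z := -(K + 1 : ℕ) * t + r) (by push_cast; nlinarith)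
    rw [hc, mul_add_mem_runnerSet_iff] at hmem
    exact hmem.le
  · ext z
    rw [mem_image_bead_range_iff fun i hi => hK i (by omega), mem_runnerWindow, hc]
    push_cast
    rw [neg_mul, mul_comm]

lemma IsPartition.sum_eq_zero_of_beads_eq_runnerSet (hf : IsPartition f)
    (hc : beads f = runnerSet c) : ∑ r, c r = 0 := by
  obtain ⟨K₀, hK₀, -, hW⟩ := hf.exists_image_bead_range_eq_runnerWindow hc
  have hcard := card_runnerWindow hK₀
  rw [← hW, card_image_of_injective _ (strictAnti_bead hf.1).injective, card_range] at hcard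
  push_cast at hcard
  linarith

lemma IsPartition.two_mul_psize_of_beads_eq_runnerSet (hf : IsPartition f)
    (hc : beads f = runnerSet c) :
    2 * (psize f : ℤ) = t * ∑ r, c r * (c r - 1) + 2 * ∑ r : Fin t, ((r : ℕ) + 1) * c r := by
  obtain ⟨K₀, hK₀, hK, hW⟩ := hf.exists_image_bead_range_eq_runnerWindow hc
  have hsum := two_mul_sum_runnerWindow hK₀
  rw [← hW, sum_image (strictAnti_bead hf.1).injective.injOn, two_mul_sum_bead hK] at hsum
  have hrunner (r : Fin t) : (c r - -K₀) * ((-K₀ + c r - 1) * t + 2 * r) =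
      t * (c r * (c r - 1)) + 2 * (((r : ℕ) + 1) * c r) + 2 * K₀ * r - t * (K₀ * (K₀ + 1))
        - 2 * c r := by ring
  simp only [hrunner, sum_sub_distrib, sum_add_distrib, ← mul_sum, sum_const, card_univ,
    Fintype.card_fin, nsmul_eq_mul, hf.sum_eq_zero_of_beads_eq_runnerSet hc] at hsum
  push_cast at hsum
  linear_combination hsum + K₀ * two_mul_sum_fin_val t

lemma IsPartition.psize_of_beads_eq_runnerSet (hf : IsPartition f) (hc : beads f = runnerSet c) :
    (psize f : ℤ) = t * ((∑ r, c r * (c r - 1)) / 2) + ∑ r : Fin t, ((r : ℕ) + 1) * c r := by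
  have heven : Even (∑ r, c r * (c r - 1)) := even_sum _ fun r _ => Int.even_mul_pred_self (c r)
  have := hf.two_mul_psize_of_beads_eq_runnerSet hc
  rw [← Int.two_mul_ediv_two_of_even heven] at this
  linarith

lemma exists_isPartition_beads_eq_runnerSet (hc : ∑ r, c r = 0) :
    ∃ f, IsPartition f ∧ beads f = runnerSet c := by
  set K₀ : ℕ := ∑ r, (c r).natAbs
  have hK₀ (r : Fin t) : -(K₀ : ℤ) ≤ c r := by
    have := single_le_sum (f := fun r => (c r).natAbs) (fun _ _ => Nat.zero_le _) (mem_univ r)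
    omega
  have ht : (0 : ℤ) < t := by exact_mod_cast NeZero.pos t
  refine exists_isPartition_beads_eq (K := t * K₀) (s := runnerWindow (-K₀) c) (fun z => ?_) ?_
    (fun z hz => ?_)
  · rw [mem_runnerWindow]
    push_cast
    rw [neg_mul, mul_comm]
  · have : ((runnerWindow (-K₀) c).card : ℤ) = t * K₀ := by rw [card_runnerWindow hK₀, hc]; ring
    exact_mod_cast this
  · obtain ⟨k, r, rfl⟩ := exists_eq_mul_add (t := t) z
    have hr : (0 : ℤ) ≤ r := by positivity
    rw [mul_add_mem_runnerSet_iff]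
    push_cast at hz
    have : k < -K₀ := by nlinarith
    linarith [hK₀ r]

lemma IsTCore.beads_eq_runnerSet (hf : IsTCore t f) :
    beads f = runnerSet (runners t (beads f)) := by
  obtain ⟨K, hK⟩ := hf.1.exists_eq_zero
  exact eq_runnerSet_runners (bddAbove_beads hf.1.1) (fun z hz => mem_beads_of_lt hK hz)
    (hf.1.isTCore_iff_s8.mp hf)

end SizeFormula

/-- The number of `t`-core partitions of `n` equals the number of vectors
`(m_1,…,m_t) ∈ ℤ^t` with `Σ m_j = 0` and `t·Σ m_j(m_j-1)/2 + Σ j·m_j = n`. -/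
theorem stmt8 (t n : ℕ) (ht : 0 < t) :
    Nat.card {g : ℕ → ℕ // IsTCore t g ∧ psize g = n} =
      Nat.card {m : Fin t → ℤ // (∑ j, m j) = 0 ∧
        (t : ℤ) * ((∑ j, m j * (m j - 1)) / 2) +
          ∑ j : Fin t, (((j : ℕ) : ℤ) + 1) * m j = (n : ℤ)} := by
  have : NeZero t := ⟨ht.ne'⟩
  refine Nat.card_eq_of_bijective (fun g => ⟨runners t (beads g.1),
    g.2.1.1.sum_eq_zero_of_beads_eq_runnerSet g.2.1.beads_eq_runnerSet,
    (g.2.1.1.psize_of_beads_eq_runnerSet g.2.1.beads_eq_runnerSet).symm.trans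
      (by exact_mod_cast g.2.2)⟩)
    ⟨?_, ?_⟩
  · intro ⟨f, hf, _⟩ ⟨g, hg, _⟩ h
    refine Subtype.ext (eq_of_beads_eq hf.1.1 hg.1.1 ?_)
    rw [hf.beads_eq_runnerSet, hg.beads_eq_runnerSet]
    exact congrArg (runnerSet ∘ Subtype.val) h
  · rintro ⟨c, hsum, hsize⟩
    obtain ⟨f, hf, hfc⟩ := exists_isPartition_beads_eq_runnerSet hsum
    have hcore : IsTCore t f := hf.isTCore_iff_s8.mpr (hfc ▸ fun _ => sub_mem_runnerSet)
    refine ⟨⟨f, hcore, by exact_mod_cast (hf.psize_of_beads_eq_runnerSet hfc).trans hsize⟩, ?_⟩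
    exact Subtype.ext (runnerSet_injective (hcore.beads_eq_runnerSet.symm.trans hfc))
end

section
/- Jacobi's triple product identity: for |q| < 1 and z ≠ 0, (−zq; q)_∞ · (−1/z; q)_∞ = (1/(q;q)_∞) · Σ_{n=−∞}^{∞} z^n q^{n(n+1)/2}. -/
open Filter

/-!
Expanding `∏_{k<2N} (1 + w q^k)` with `w = z q^(1-N)` by the `q`-binomial theorem gives the finite
identity `(-zq;q)_N (-1/z;q)_N = ∑_{|n| ≤ N} [2N, N+n]_q z^n q^(n(n+1)/2)`. As `N → ∞` each
Gaussian binomial `[2N, N+n]_q = (q;q)_{2N} / ((q;q)_{N+n} (q;q)_{N-n})` tends to `1/(q;q)_∞`, and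
all of them are bounded by one constant, so dominated convergence for series (Tannery's theorem)
passes to the limit. The substitution needs `q ≠ 0`; at `q = 0` both sides equal `1 + 1/z`.
-/

open Finset Topology

lemma choose_two_succ (n : ℕ) : (n + 1).choose 2 = n.choose 2 + n := by
  rw [Nat.choose_succ_succ', Nat.choose_one_right, add_comm]

lemma two_mul_choose_two (n : ℕ) : 2 * (n.choose 2 : ℤ) = n * (n - 1) := by
  induction n with
  | zero => simp
  | succ n ih =>
    rw [choose_two_succ]
    push_cast
    linear_combination ih

lemma choose_two_add_choose_two_add_mul (N m : ℕ) :
    (N.choose 2 + m.choose 2 : ℤ) + (1 - N) * m = (m - N) * (m - N + 1) / 2 := by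
  rw [Int.ediv_eq_of_eq_mul_left two_ne_zero]
  linear_combination -two_mul_choose_two N - two_mul_choose_two m

lemma natCast_mul_add_one_ediv_two (k : ℕ) : (k : ℤ) * (k + 1) / 2 = ((k + 1).choose 2 : ℕ) := by
  have h := two_mul_choose_two (k + 1)
  push_cast at h
  rw [Int.ediv_eq_of_eq_mul_left two_ne_zero]
  linear_combination -h

lemma neg_natCast_add_one_mul_ediv_two (k : ℕ) :
    (-((k : ℤ) + 1)) * (-((k : ℤ) + 1) + 1) / 2 = ((k + 1).choose 2 : ℕ) := by
  have h := two_mul_choose_two (k + 1)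
  push_cast at h
  rw [Int.ediv_eq_of_eq_mul_left two_ne_zero]
  linear_combination -h

section CommRing

variable {R : Type*} [CommRing R] (q : R)

/-- `(q;q)_n`. -/
def qPochhammer (n : ℕ) : R := ∏ k ∈ range n, (1 - q ^ (k + 1))

def qBinomial : ℕ → ℕ → R
  | _, 0 => 1
  | 0, _ + 1 => 0
  | n + 1, k + 1 => qBinomial n k + q ^ (k + 1) * qBinomial n (k + 1)

@[simp] lemma qPochhammer_zero : qPochhammer q 0 = 1 := prod_range_zero _

lemma qPochhammer_succ (n : ℕ) : qPochhammer q (n + 1) = qPochhammer q n * (1 - q ^ (n + 1)) :=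
  prod_range_succ _ _

@[simp] lemma qBinomial_zero_right (n : ℕ) : qBinomial q n 0 = 1 := by
  cases n <;> rfl

lemma qBinomial_succ_succ (n k : ℕ) :
    qBinomial q (n + 1) (k + 1) = qBinomial q n k + q ^ (k + 1) * qBinomial q n (k + 1) := rfl

lemma qBinomial_eq_zero_of_lt : ∀ {n k : ℕ}, n < k → qBinomial q n k = 0
  | 0, _ + 1, _ => rfl
  | n + 1, k + 1, h => by
    rw [qBinomial_succ_succ, qBinomial_eq_zero_of_lt (by omega),
      qBinomial_eq_zero_of_lt (by omega), mul_zero, add_zero]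

@[simp] lemma qBinomial_self : ∀ n : ℕ, qBinomial q n n = 1
  | 0 => rfl
  | n + 1 => by
    rw [qBinomial_succ_succ, qBinomial_self n, qBinomial_eq_zero_of_lt q n.lt_succ_self,
      mul_zero, add_zero]

theorem qBinomial_mul_qPochhammer_mul_qPochhammer : ∀ a b : ℕ,
    qBinomial q (a + b) a * qPochhammer q a * qPochhammer q b = qPochhammer q (a + b)
  | 0, b => by simp
  | a + 1, 0 => by simp
  | a + 1, b + 1 => by
    have h₁ := qBinomial_mul_qPochhammer_mul_qPochhammer a (b + 1)
    have h₂ := qBinomial_mul_qPochhammer_mul_qPochhammer (a + 1) b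
    rw [qPochhammer_succ q b] at h₁
    rw [show a + 1 + b = a + (b + 1) by omega, qPochhammer_succ q a] at h₂
    rw [show a + 1 + (b + 1) = a + (b + 1) + 1 by omega, qBinomial_succ_succ,
      qPochhammer_succ q (a + (b + 1)), qPochhammer_succ q a, qPochhammer_succ q b]
    linear_combination (1 - q ^ (a + 1)) * h₁ + (q ^ (a + 1) * (1 - q ^ (b + 1))) * h₂

theorem prod_one_add_mul_pow_eq_sum_qBinomial (w : R) (n : ℕ) :
    ∏ k ∈ range n, (1 + w * q ^ k) =
      ∑ m ∈ range (n + 1), qBinomial q n m * q ^ m.choose 2 * w ^ m := by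
  induction n generalizing w with
  | zero => simp
  | succ n ih =>
    have hprod : ∏ k ∈ range (n + 1), (1 + w * q ^ k) =
        (1 + w) * ∏ k ∈ range n, (1 + w * q * q ^ k) := by
      rw [prod_range_succ', pow_zero, mul_one, mul_comm]
      exact congrArg _ (prod_congr rfl fun k _ => by ring)
    have hlow : ∑ m ∈ range (n + 1), qBinomial q n m * q ^ m.choose 2 * (w * q) ^ m =
        ∑ m ∈ range (n + 1),
          q ^ (m + 1) * qBinomial q n (m + 1) * q ^ (m + 1).choose 2 * w ^ (m + 1) + 1 := by
      rw [sum_range_succ' _ n, sum_range_succ _ n, qBinomial_eq_zero_of_lt q n.lt_succ_self]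
      simp only [qBinomial_zero_right, mul_zero, zero_mul, add_zero, mul_pow, pow_zero,
        Nat.choose_zero_succ, mul_one]
      exact congrArg (· + 1) (sum_congr rfl fun m _ => by ring)
    have hhigh : w * ∑ m ∈ range (n + 1), qBinomial q n m * q ^ m.choose 2 * (w * q) ^ m =
        ∑ m ∈ range (n + 1), qBinomial q n m * q ^ (m + 1).choose 2 * w ^ (m + 1) := by
      rw [mul_sum]
      exact sum_congr rfl fun m _ => by rw [choose_two_succ]; ring
    rw [hprod, ih, add_mul, one_mul, hhigh, hlow, sum_range_succ' _ (n + 1)]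
    simp only [qBinomial_succ_succ, add_mul, sum_add_distrib, qBinomial_zero_right,
      Nat.choose_zero_succ, pow_zero, mul_one]
    ring

end CommRing

section Field

variable {K : Type*} [Field K] {q z : K}

lemma prod_one_add_mul_zpow_neg (hq : q ≠ 0) (hz : z ≠ 0) (N : ℕ) :
    ∏ k ∈ range N, (1 + z * q ^ (-(k : ℤ))) =
      z ^ N * (q ^ N.choose 2)⁻¹ * ∏ k ∈ range N, (1 + z⁻¹ * q ^ k) := by
  have factor (k : ℕ) : 1 + z * q ^ (-(k : ℤ)) = z * (q ^ k)⁻¹ * (1 + z⁻¹ * q ^ k) := by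
    rw [zpow_neg, zpow_natCast]
    field_simp
    ring
  rw [prod_congr rfl fun k _ => factor k, prod_mul_distrib, prod_mul_distrib, prod_const,
    card_range, prod_inv_distrib, prod_pow_eq_pow_sum, sum_range_id, Nat.choose_two_right]

theorem prod_mul_prod_eq_sum_qBinomial (hq : q ≠ 0) (hz : z ≠ 0) (N : ℕ) :
    (∏ k ∈ range N, (1 + z * q ^ (k + 1))) * ∏ k ∈ range N, (1 + z⁻¹ * q ^ k) =
      ∑ m ∈ range (2 * N + 1), qBinomial q (2 * N) m * z ^ ((m : ℤ) - N) *
        q ^ (((m : ℤ) - N) * ((m : ℤ) - N + 1) / 2) := by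
  set w := z * q ^ (1 - N : ℤ)
  have hsplit : ∏ k ∈ range (2 * N), (1 + w * q ^ k) =
      (∏ k ∈ range N, (1 + z * q ^ (-(k : ℤ)))) * ∏ k ∈ range N, (1 + z * q ^ (k + 1)) := by
    rw [two_mul, prod_range_add, ← prod_range_reflect]
    congr 1 <;> refine prod_congr rfl fun k hk => ?_
    · rw [mul_assoc, ← zpow_natCast, ← zpow_add₀ hq]
      have := mem_range.mp hk
      congr 3
      omega
    · rw [mul_assoc, ← zpow_natCast, ← zpow_add₀ hq, ← zpow_natCast]
      congr 3
      push_cast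
      ring
  have hterm (m : ℕ) : q ^ m.choose 2 * w ^ m = z ^ N * (q ^ N.choose 2)⁻¹ *
      (z ^ ((m : ℤ) - N) * q ^ (((m : ℤ) - N) * ((m : ℤ) - N + 1) / 2)) := by
    have hzm : z ^ N * z ^ ((m : ℤ) - N) = z ^ m := by
      rw [← zpow_natCast, ← zpow_add₀ hz, add_sub_cancel, zpow_natCast]
    rw [← choose_two_add_choose_two_add_mul, zpow_add₀ hq, zpow_add₀ hq, zpow_mul, zpow_natCast,
      zpow_natCast, zpow_natCast, mul_pow, ← hzm]
    field_simp
  have key := prod_one_add_mul_pow_eq_sum_qBinomial q w (2 * N)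
  rw [hsplit, prod_one_add_mul_zpow_neg hq hz] at key
  simp_rw [mul_assoc _ (q ^ _), hterm, mul_left_comm _ (z ^ N * _), ← mul_sum] at key
  apply mul_left_cancel₀ (by simp [hz, hq] : z ^ N * (q ^ N.choose 2)⁻¹ ≠ 0)
  simp_rw [mul_assoc (qBinomial q (2 * N) _)]
  linear_combination key

end Field

lemma tsum_ite_natAbs_le {M : Type*} [AddCommMonoid M] [TopologicalSpace M] (g : ℤ → M) (N : ℕ) :
    ∑' n : ℤ, (if n.natAbs ≤ N then g n else 0) = ∑ m ∈ range (2 * N + 1), g (m - N) := by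
  rw [tsum_eq_sum (s := Icc (-N : ℤ) N) fun n hn => if_neg (by simp only [mem_Icc] at hn; omega)]
  refine sum_nbij' (fun n => (n + N).toNat) (fun m => m - N) ?_ ?_ ?_ ?_ ?_ <;> intro n hn <;>
    simp only [mem_Icc, mem_range] at hn ⊢
  · omega
  · omega
  · omega
  · omega
  · rw [if_pos (by omega)]
    congr
    omega

lemma summable_pow_mul_pow_choose_two (a : ℝ) {r : ℝ} (hr₀ : 0 ≤ r) (hr : r < 1) :
    Summable fun k : ℕ => a ^ k * r ^ (k + 1).choose 2 := by
  refine summable_of_ratio_norm_eventually_le one_half_lt_one ?_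
  have hlim : Tendsto (fun k : ℕ => ‖a‖ * r ^ (k + 1)) atTop (𝓝 0) := by
    simpa using ((tendsto_pow_atTop_nhds_zero_of_lt_one hr₀ hr).comp
      (tendsto_add_atTop_nat 1)).const_mul ‖a‖
  filter_upwards [hlim.eventually_le_const one_half_pos] with k hk
  rw [choose_two_succ (k + 1), pow_add r, pow_succ a]
  calc ‖a ^ k * a * (r ^ (k + 1).choose 2 * r ^ (k + 1))‖
      = ‖a‖ * r ^ (k + 1) * ‖a ^ k * r ^ (k + 1).choose 2‖ := by
        simp only [norm_mul, Real.norm_of_nonneg (pow_nonneg hr₀ _)]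
        ring
    _ ≤ 1 / 2 * ‖a ^ k * r ^ (k + 1).choose 2‖ := by gcongr

section NormedField

variable {K : Type*} [NormedField K] {q : K}

lemma summable_norm_mul_pow (hq : ‖q‖ < 1) (w : K) : Summable fun k : ℕ => ‖w * q ^ k‖ := by
  simpa only [norm_mul] using (summable_norm_geometric_of_norm_lt_one hq).mul_left ‖w‖

lemma summable_norm_neg_pow_succ (hq : ‖q‖ < 1) : Summable fun k : ℕ => ‖-q ^ (k + 1)‖ :=
  (summable_norm_mul_pow hq (-q)).congr fun k => by rw [pow_succ', neg_mul]

lemma summable_norm_zpow_mul_zpow_triangle (hq : ‖q‖ < 1) (z : K) :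
    Summable fun n : ℤ => ‖z ^ n * q ^ (n * (n + 1) / 2)‖ := by
  refine .of_nat_of_neg_add_one ?_ ?_
  · refine (summable_pow_mul_pow_choose_two ‖z‖ (norm_nonneg q) hq).congr fun k => ?_
    rw [natCast_mul_add_one_ediv_two, norm_mul, zpow_natCast, zpow_natCast, norm_pow, norm_pow]
  · refine ((summable_pow_mul_pow_choose_two ‖z‖⁻¹ (norm_nonneg q) hq).mul_left ‖z‖⁻¹).congr
      fun k => ?_
    rw [neg_natCast_add_one_mul_ediv_two, norm_mul, zpow_natCast, zpow_neg, ← Nat.cast_succ,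
      zpow_natCast, norm_inv, norm_pow, norm_pow, inv_pow, pow_succ]
    ring

lemma one_sub_pow_succ_ne_zero (hq : ‖q‖ < 1) (k : ℕ) : 1 - q ^ (k + 1) ≠ 0 := by
  rw [sub_ne_zero]
  intro h
  have := congrArg norm h
  rw [norm_one, norm_pow] at this
  exact (pow_lt_one₀ (norm_nonneg q) hq k.succ_ne_zero).ne this.symm

lemma qBinomial_eq_mul_inv (hq : ‖q‖ < 1) (a b : ℕ) :
    qBinomial q (a + b) a =
      qPochhammer q (a + b) * (qPochhammer q a)⁻¹ * (qPochhammer q b)⁻¹ := by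
  have ne_zero (n : ℕ) : qPochhammer q n ≠ 0 :=
    prod_ne_zero_iff.mpr fun k _ => one_sub_pow_succ_ne_zero hq k
  rw [← qBinomial_mul_qPochhammer_mul_qPochhammer]
  field_simp [ne_zero a, ne_zero b]

variable [CompleteSpace K]

lemma tendsto_prod_range_one_add {c : ℕ → K} (hc : Summable fun k => ‖c k‖) :
    Tendsto (fun N => ∏ k ∈ range N, (1 + c k)) atTop (𝓝 (∏' k, (1 + c k))) :=
  (multipliable_one_add_of_summable hc).hasProd.tendsto_prod_nat

lemma tprod_one_sub_pow_succ_ne_zero (hq : ‖q‖ < 1) : ∏' k : ℕ, (1 - q ^ (k + 1)) ≠ 0 := by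
  have h := one_sub_pow_succ_ne_zero hq
  simp_rw [sub_eq_add_neg] at h ⊢
  exact tprod_one_add_ne_zero_of_summable h (summable_norm_neg_pow_succ hq)

lemma tendsto_qPochhammer (hq : ‖q‖ < 1) :
    Tendsto (qPochhammer q) atTop (𝓝 (∏' k : ℕ, (1 - q ^ (k + 1)))) := by
  change Tendsto (fun n => ∏ k ∈ range n, (1 - q ^ (k + 1))) _ _
  simp_rw [sub_eq_add_neg]
  exact tendsto_prod_range_one_add (summable_norm_neg_pow_succ hq)

lemma tendsto_qBinomial (hq : ‖q‖ < 1) {ι : Type*} {l : Filter ι} {a b : ι → ℕ}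
    (ha : Tendsto a l atTop) (hb : Tendsto b l atTop) :
    Tendsto (fun i => qBinomial q (a i + b i) (a i)) l (𝓝 (∏' k : ℕ, (1 - q ^ (k + 1)))⁻¹) := by
  have hP := tendsto_qPochhammer hq
  have hP₀ := tprod_one_sub_pow_succ_ne_zero hq
  have hab : Tendsto (fun i => a i + b i) l atTop :=
    tendsto_atTop_mono (fun i => Nat.le_add_right _ _) ha
  have := ((hP.comp hab).mul ((hP.comp ha).inv₀ hP₀)).mul ((hP.comp hb).inv₀ hP₀)
  rw [mul_inv_cancel₀ hP₀, one_mul] at this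
  simpa only [qBinomial_eq_mul_inv hq, Function.comp_def] using this

lemma exists_norm_qBinomial_le (hq : ‖q‖ < 1) : ∃ C, ∀ a b : ℕ, ‖qBinomial q (a + b) a‖ ≤ C := by
  have hP := tendsto_qPochhammer hq
  obtain ⟨C₁, hC₁⟩ := isBounded_iff_forall_norm_le.mp (Metric.isBounded_range_of_tendsto _ hP)
  obtain ⟨C₂, hC₂⟩ := isBounded_iff_forall_norm_le.mp
    (Metric.isBounded_range_of_tendsto _ (hP.inv₀ (tprod_one_sub_pow_succ_ne_zero hq)))
  simp only [Set.forall_mem_range] at hC₁ hC₂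
  have hC₁₀ : 0 ≤ C₁ := (norm_nonneg _).trans (hC₁ 0)
  have hC₂₀ : 0 ≤ C₂ := (norm_nonneg _).trans (hC₂ 0)
  refine ⟨C₁ * C₂ * C₂, fun a b => ?_⟩
  rw [qBinomial_eq_mul_inv hq, norm_mul, norm_mul]
  exact mul_le_mul (mul_le_mul (hC₁ _) (hC₂ a) (norm_nonneg _) hC₁₀) (hC₂ b) (norm_nonneg _)
    (mul_nonneg hC₁₀ hC₂₀)

lemma tendsto_tsum_qBinomial_mul (hq : ‖q‖ < 1) {c : ℤ → K} (hc : Summable fun n => ‖c n‖) :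
    Tendsto (fun N : ℕ => ∑' n : ℤ, if n.natAbs ≤ N then
        qBinomial q ((N + n).toNat + (N - n).toNat) (N + n).toNat * c n else 0)
      atTop (𝓝 ((∏' k : ℕ, (1 - q ^ (k + 1)))⁻¹ * ∑' n, c n)) := by
  obtain ⟨C, hC⟩ := exists_norm_qBinomial_le hq
  rw [← tsum_mul_left]
  refine tendsto_tsum_of_dominated_convergence (hc.mul_left C) (fun n => ?_)
    (.of_forall fun N n => ?_)
  · have tendsto_toNat (s : ℤ) : Tendsto (fun N : ℕ => (N + s).toNat) atTop atTop :=
      tendsto_atTop_atTop.mpr fun b => ⟨b + s.natAbs, fun N hN => by omega⟩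
    refine ((tendsto_qBinomial hq (tendsto_toNat n) (tendsto_toNat (-n))).mul_const _).congr' ?_
    filter_upwards [eventually_ge_atTop n.natAbs] with N hN
    rw [if_pos hN, ← sub_eq_add_neg]
  · split_ifs
    · rw [norm_mul]
      exact mul_le_mul_of_nonneg_right (hC _ _) (norm_nonneg _)
    · rw [norm_zero]
      exact mul_nonneg ((norm_nonneg _).trans (hC 0 0)) (norm_nonneg _)

theorem jacobi_triple_product_of_ne_zero {z : K} (hq : ‖q‖ < 1) (hq₀ : q ≠ 0) (hz : z ≠ 0) :
    (∏' k : ℕ, (1 + z * q ^ (k + 1))) * (∏' k : ℕ, (1 + z⁻¹ * q ^ k)) =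
      (∏' k : ℕ, (1 - q ^ (k + 1)))⁻¹ * ∑' n : ℤ, z ^ n * q ^ (n * (n + 1) / 2) := by
  have hA := tendsto_prod_range_one_add (c := fun k => z * q ^ (k + 1))
    ((summable_norm_mul_pow hq (z * q)).congr fun k => by rw [pow_succ', mul_assoc])
  have hB := tendsto_prod_range_one_add (c := fun k => z⁻¹ * q ^ k) (summable_norm_mul_pow hq z⁻¹)
  refine tendsto_nhds_unique (hA.mul hB) ?_
  refine (tendsto_tsum_qBinomial_mul hq (summable_norm_zpow_mul_zpow_triangle hq z)).congr
    fun N => ?_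
  rw [prod_mul_prod_eq_sum_qBinomial hq₀ hz, tsum_ite_natAbs_le]
  refine sum_congr rfl fun m hm => ?_
  rw [mem_range] at hm
  rw [← mul_assoc]
  congr 3 <;> omega

lemma jacobi_triple_product_zero (z : K) :
    (∏' k : ℕ, (1 + z * (0 : K) ^ (k + 1))) * (∏' k : ℕ, (1 + z⁻¹ * (0 : K) ^ k)) =
      (∏' k : ℕ, (1 - (0 : K) ^ (k + 1)))⁻¹ * ∑' n : ℤ, z ^ n * (0 : K) ^ (n * (n + 1) / 2) := by
  have hsum : ∑' n : ℤ, z ^ n * (0 : K) ^ (n * (n + 1) / 2) = 1 + z⁻¹ := by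
    rw [← tsum_nat_add_neg_add_one
      (summable_norm_zpow_mul_zpow_triangle (by simp) z).of_norm, tsum_eq_single 0]
    · simp
    · intro k hk
      have : (k + 1).choose 2 ≠ 0 := by rw [Ne, Nat.choose_eq_zero_iff]; omega
      rw [natCast_mul_add_one_ediv_two, neg_natCast_add_one_mul_ediv_two,
        zero_zpow _ (mod_cast this), mul_zero, mul_zero, add_zero]
  have hprod : ∏' k : ℕ, (1 + z⁻¹ * (0 : K) ^ k) = 1 + z⁻¹ :=
    (tprod_eq_mulSingle 0 fun k hk => by simp [hk]).trans (by simp)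
  simp [hprod, hsum]

theorem jacobi_triple_product {z : K} (hq : ‖q‖ < 1) (hz : z ≠ 0) :
    (∏' k : ℕ, (1 + z * q ^ (k + 1))) * (∏' k : ℕ, (1 + z⁻¹ * q ^ k)) =
      (∏' k : ℕ, (1 - q ^ (k + 1)))⁻¹ * ∑' n : ℤ, z ^ n * q ^ (n * (n + 1) / 2) := by
  rcases eq_or_ne q 0 with rfl | hq₀
  · exact jacobi_triple_product_zero z
  · exact jacobi_triple_product_of_ne_zero hq hq₀ hz

end NormedField

/-- Jacobi's triple product identity:
`(-zq; q)_∞ (-1/z; q)_∞ = (q;q)_∞⁻¹ Σ_{n∈ℤ} z^n q^{n(n+1)/2}` for `‖q‖ < 1`, `z ≠ 0`. -/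
theorem stmt17 (q z : ℂ) (hq : ‖q‖ < 1) (hz : z ≠ 0) :
    (∏' k : ℕ, (1 + z * q ^ (k + 1))) * (∏' k : ℕ, (1 + z⁻¹ * q ^ k)) =
      (∏' k : ℕ, (1 - q ^ (k + 1)))⁻¹ * ∑' n : ℤ, z ^ n * q ^ (n * (n + 1) / 2) :=
  jacobi_triple_product hq hz
end
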